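/- The Lie algebra 𝔤 of the previous statement has nilradical 𝔫 = span{p₁, p₂, Xₐ, JXₐ, A} and 𝔫 is 2-step nilpotent. -/

import Mathlib

/-!
Write `Y = JX` and `𝔷 = span {A, p₁, p₂}`. The elements of `𝔷` commute with all of `𝔫`, and
`[Xₐ, JX_c] ∈ 𝔷`: by the Leibniz rule it is an eigenvector of `ad q₁` with eigenvalue `2`, whereas
`ad q₁` multiplies every basis coordinate outside `𝔷` by `0` or `1`. Hence `[𝔫, 𝔫] ⊆ 𝔷` and `𝔫` is
2-step nilpotent. As `ad q₁` and `ad q₂` preserve `𝔫` and `𝔤 = ℝq₁ + ℝq₂ + 𝔫`, `𝔫` is an ideal.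
If `v = δq₁ + ζq₂ + m` (`m ∈ 𝔫`) lies in a nilpotent ideal, then `ad v` is nilpotent. Now
`2p₂ + A` is an eigenvector of `ad v` with eigenvalue `2δ`, and once `δ = 0`, `p₂ + A` is an
eigenvector of `(ad v)²` with eigenvalue `εζ²`; so `δ = ζ = 0` and `v ∈ 𝔫`.
-/

open LieAlgebra Module Submodule Set

theorem Module.Basis.repr_apply_eq_mul_of_forall {ι R M : Type*} [CommSemiring R]
    [AddCommMonoid M] [Module R M] (B : Basis ι R M) (f : M →ₗ[R] M) {j : ι} {c : R}
    (h : ∀ i, B.repr (f (B i)) j = c * B.repr (B i) j) (w : M) :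
    B.repr (f w) j = c * B.repr w j := by
  have : B.coord j ∘ₗ f = c • B.coord j := B.ext fun i => by simpa using h i
  simpa using LinearMap.congr_fun this w

theorem Module.Basis.smul_add_ne_zero {ι R M : Type*} [Ring R] [Nontrivial R]
    [AddCommGroup M] [Module R M] (B : Basis ι R M) {i j : ι} (hij : i ≠ j) (c : R) :
    c • B i + B j ≠ 0 := fun h => by
  simpa [Finsupp.single_apply, hij] using congrArg (fun w => B.repr w j) h

theorem lie_eq_zero_comm {L : Type*} [LieRing L] {x y : L} : ⁅x, y⁆ = 0 ↔ ⁅y, x⁆ = 0 := by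
  rw [← lie_skew, neg_eq_zero]

theorem lie_mem_of_mem_span {R L : Type*} [CommRing R] [LieRing L] [LieAlgebra R L]
    {s t : Set L} {P : Submodule R L} (h : ∀ x ∈ s, ∀ y ∈ t, ⁅x, y⁆ ∈ P) {x y : L}
    (hx : x ∈ span R s) (hy : y ∈ span R t) : ⁅x, y⁆ ∈ P := by
  induction hx using Submodule.span_induction with
  | mem x hx =>
    induction hy using Submodule.span_induction with
    | mem y hy => exact h x hx y hy
    | zero => simp
    | add _ _ _ _ h₁ h₂ => rw [lie_add]; exact P.add_mem h₁ h₂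
    | smul c _ _ h₁ => rw [lie_smul]; exact P.smul_mem c h₁
  | zero => simp
  | add _ _ _ _ h₁ h₂ => rw [add_lie]; exact P.add_mem h₁ h₂
  | smul c _ _ h₁ => rw [smul_lie]; exact P.smul_mem c h₁

theorem LieIdeal.isNilpotent_ad_of_mem {R L : Type*} [CommRing R] [LieRing L] [LieAlgebra R L]
    (I : LieIdeal R L) [LieRing.IsNilpotent I] {v : L} (hv : v ∈ I) :
    IsNilpotent (LieAlgebra.ad R L v) := by
  obtain ⟨k, hk⟩ := LieAlgebra.nilpotent_ad_of_nilpotent_algebra R I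
  have hcomm := Module.End.commute_pow_left_of_commute
    ((I : LieSubalgebra R L).ad_comp_incl_eq ⟨v, hv⟩) k
  -- `ad v` maps `L` into `I`, on which it is nilpotent
  refine ⟨k + 1, LinearMap.ext fun w => ?_⟩
  have := LinearMap.congr_fun hcomm ⟨⁅v, w⁆, lie_mem_left R L I v w hv⟩
  rw [pow_succ, Module.End.mul_apply]
  exact this.trans (congrArg Subtype.val (LinearMap.congr_fun (hk ⟨v, hv⟩) _))

theorem Module.End.eq_zero_of_isNilpotent_of_apply_eq_smul {K M : Type*} [Field K]
    [AddCommGroup M] [Module K M] {f : Module.End K M} (hf : IsNilpotent f) {c : K} {x : M}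
    (hx : x ≠ 0) (hfx : f x = c • x) : c = 0 :=
  (Module.End.hasEigenvalue_of_hasEigenvector
    ⟨Module.End.mem_eigenspace_iff.mpr hfx, hx⟩).isNilpotent_of_isNilpotent hf |>.eq_zero

section

variable {n : ℕ} {ε b R₀ : ℝ} {L : Type*} [LieRing L] [LieAlgebra ℝ L]
  {A p1 p2 q1 q2 : L} {X Y : Fin n → L}

theorem lie_eq_zero_of_mem_span_center
    (hz1 : ⁅A, p1⁆ = 0) (hz2 : ⁅A, p2⁆ = 0)
    (hz3 : ∀ a, ⁅A, X a⁆ = 0) (hz4 : ∀ a, ⁅A, Y a⁆ = 0)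
    (hz5 : ⁅p1, p2⁆ = 0)
    (hz6 : ∀ a, ⁅p1, X a⁆ = 0) (hz7 : ∀ a, ⁅p1, Y a⁆ = 0)
    (hz8 : ∀ a, ⁅p2, X a⁆ = 0) (hz9 : ∀ a, ⁅p2, Y a⁆ = 0) {z y : L}
    (hz : z ∈ span ℝ {A, p1, p2}) (hy : y ∈ span ℝ ({A, p1, p2} ∪ range X ∪ range Y)) :
    ⁅z, y⁆ = 0 := by
  refine (mem_bot ℝ).1 (lie_mem_of_mem_span ?_ hz hy)
  rintro x (rfl | rfl | rfl) y (((rfl | rfl | rfl) | ⟨a, rfl⟩) | ⟨a, rfl⟩) <;>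
    simp [lie_eq_zero_comm.1 hz1, lie_eq_zero_comm.1 hz2, lie_eq_zero_comm.1 hz5, *]

theorem lie_X_Y_mem_span_center (B : Basis (Fin 5 ⊕ Fin n × Fin 2) ℝ L)
    (hA : A = B (Sum.inl 0)) (hp1 : p1 = B (Sum.inl 1)) (hp2 : p2 = B (Sum.inl 2))
    (hq1 : q1 = B (Sum.inl 3)) (hq2 : q2 = B (Sum.inl 4))
    (hX : ∀ a, X a = B (Sum.inr (a, 0))) (hY : ∀ a, Y a = B (Sum.inr (a, 1)))
    (h1 : ⁅A, q1⁆ = (2 : ℝ) • p2) (h3 : ⁅p1, q1⁆ = -p1) (h5 : ⁅p2, q1⁆ = -((3 : ℝ) • p2) - A)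
    (h7 : ⁅q1, q2⁆ = (2 * b) • p2 - ((R₀ - 2 * b) / 2) • A)
    (h8 : ∀ a, ⁅q1, X a⁆ = X a) (h9 : ∀ a, ⁅q1, Y a⁆ = Y a) (a c : Fin n) :
    ⁅X a, Y c⁆ ∈ span ℝ {A, p1, p2} := by
  have hw : ⁅q1, ⁅X a, Y c⁆⁆ = (2 : ℝ) • ⁅X a, Y c⁆ := by
    rw [leibniz_lie, h8, h9, two_smul]
  have k1 : ⁅q1, A⁆ = -((2 : ℝ) • p2) := by rw [← lie_skew, h1]
  have k3 : ⁅q1, p1⁆ = p1 := by rw [← lie_skew, h3, neg_neg]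
  have k5 : ⁅q1, p2⁆ = (3 : ℝ) • p2 + A := by
    rw [← lie_skew, h5, neg_sub, sub_neg_eq_add, add_comm]
  subst hA hp1 hp2 hq1 hq2
  simp only [hX, hY] at h8 h9 hw ⊢
  have hV : ∀ a k, ⁅B (Sum.inl 3), B (Sum.inr (a, k))⁆ = B (Sum.inr (a, k)) := fun a k => by
    fin_cases k
    exacts [h8 a, h9 a]
  rw [show ({B (Sum.inl 0), B (Sum.inl 1), B (Sum.inl 2)} : Set L) =
      B '' {Sum.inl 0, Sum.inl 1, Sum.inl 2} by simp [image_insert_eq], B.mem_span_image]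
  intro j hj
  by_contra hjs
  refine Finsupp.mem_support_iff.1 hj ?_
  obtain ⟨μ, hμ, hμj⟩ : ∃ μ : ℝ, μ ≠ 2 ∧
      ∀ i, B.repr ⁅B (Sum.inl 3), B i⁆ j = μ * B.repr (B i) j := by
    rcases j with k | j
    · obtain rfl | rfl : k = 3 ∨ k = 4 := by fin_cases k <;> simp at hjs ⊢
      all_goals refine ⟨0, by norm_num, ?_⟩; rintro (i | ⟨a, k⟩) <;> try fin_cases i
      all_goals simp [k1, k3, k5, h7, hV]
    · refine ⟨1, by norm_num, ?_⟩
      rintro (i | ⟨a, k⟩) <;> try fin_cases i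
      all_goals simp [k1, k3, k5, h7, hV, Finsupp.single_apply]
  have := B.repr_apply_eq_mul_of_forall (ad ℝ L (B (Sum.inl 3))) hμj
    ⁅B (Sum.inr (a, 0)), B (Sum.inr (c, 1))⁆
  rw [ad_apply, hw, map_smul, Finsupp.smul_apply, smul_eq_mul] at this
  exact (mul_eq_mul_right_iff.1 this).resolve_left (Ne.symm hμ)

theorem lie_mem_span_center_of_mem
    (hZ : ∀ z ∈ span ℝ {A, p1, p2}, ∀ y ∈ span ℝ ({A, p1, p2} ∪ range X ∪ range Y), ⁅z, y⁆ = 0)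
    (hXY : ∀ a c, ⁅X a, Y c⁆ ∈ span ℝ {A, p1, p2})
    (hz10 : ∀ a c, ⁅X a, X c⁆ = 0) (hz11 : ∀ a c, ⁅Y a, Y c⁆ = 0) {x y : L}
    (hx : x ∈ span ℝ ({A, p1, p2} ∪ range X ∪ range Y))
    (hy : y ∈ span ℝ ({A, p1, p2} ∪ range X ∪ range Y)) :
    ⁅x, y⁆ ∈ span ℝ {A, p1, p2} := by
  have hZy : ∀ z ∈ ({A, p1, p2} : Set L), ∀ y ∈ ({A, p1, p2} ∪ range X ∪ range Y), ⁅z, y⁆ = 0 :=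
    fun z hz y hy => hZ z (subset_span hz) y (subset_span hy)
  refine lie_mem_of_mem_span ?_ hx hy
  rintro x hx y hy
  rcases hx with (hx | ⟨a, rfl⟩) | ⟨a, rfl⟩
  · rw [hZy x hx y hy]; exact zero_mem _
  all_goals rcases hy with (hy | ⟨c, rfl⟩) | ⟨c, rfl⟩
  · rw [lie_eq_zero_comm.1 (hZy y hy _ (by simp))]; exact zero_mem _
  · rw [hz10]; exact zero_mem _
  · exact hXY a c
  · rw [lie_eq_zero_comm.1 (hZy y hy _ (by simp))]; exact zero_mem _
  · rw [← lie_skew]; exact neg_mem (hXY c a)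
  · rw [hz11]; exact zero_mem _

theorem lie_q1_mem_span
    (h1 : ⁅A, q1⁆ = (2 : ℝ) • p2) (h3 : ⁅p1, q1⁆ = -p1) (h5 : ⁅p2, q1⁆ = -((3 : ℝ) • p2) - A)
    (h8 : ∀ a, ⁅q1, X a⁆ = X a) (h9 : ∀ a, ⁅q1, Y a⁆ = Y a) {y : L}
    (hy : y ∈ span ℝ ({A, p1, p2} ∪ range X ∪ range Y)) :
    ⁅q1, y⁆ ∈ span ℝ ({A, p1, p2} ∪ range X ∪ range Y) := by
  refine lie_mem_of_mem_span (s := {q1}) ?_ (mem_span_singleton_self q1) hy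
  rintro _ rfl y (((rfl | rfl | rfl) | ⟨a, rfl⟩) | ⟨a, rfl⟩)
  · rw [← lie_skew, h1]; exact neg_mem (smul_mem _ _ (subset_span (by simp)))
  · rw [← lie_skew, h3, neg_neg]; exact subset_span (by simp)
  · rw [← lie_skew, h5]
    exact neg_mem <| sub_mem (neg_mem (smul_mem _ _ (subset_span (by simp))))
      (subset_span (by simp))
  · rw [h8]; exact subset_span (by simp)
  · rw [h9]; exact subset_span (by simp)

theorem lie_q2_mem_span
    (h2 : ⁅A, q2⁆ = (2 * ε) • p1) (h4 : ⁅p1, q2⁆ = p2 + A) (h6 : ⁅p2, q2⁆ = -(ε • p1))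
    (h10 : ∀ a, ⁅q2, X a⁆ = Y a) (h11 : ∀ a, ⁅q2, Y a⁆ = ε • X a) {y : L}
    (hy : y ∈ span ℝ ({A, p1, p2} ∪ range X ∪ range Y)) :
    ⁅q2, y⁆ ∈ span ℝ ({A, p1, p2} ∪ range X ∪ range Y) := by
  refine lie_mem_of_mem_span (s := {q2}) ?_ (mem_span_singleton_self q2) hy
  rintro _ rfl y (((rfl | rfl | rfl) | ⟨a, rfl⟩) | ⟨a, rfl⟩)
  · rw [← lie_skew, h2]; exact neg_mem (smul_mem _ _ (subset_span (by simp)))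
  · rw [← lie_skew, h4]; exact neg_mem (add_mem (subset_span (by simp)) (subset_span (by simp)))
  · rw [← lie_skew, h6, neg_neg]; exact smul_mem _ _ (subset_span (by simp))
  · rw [h10]; exact subset_span (by simp)
  · rw [h11]; exact smul_mem _ _ (subset_span (by simp))

theorem exists_eq_smul_q1_add_smul_q2_add (B : Basis (Fin 5 ⊕ Fin n × Fin 2) ℝ L)
    (hA : A = B (Sum.inl 0)) (hp1 : p1 = B (Sum.inl 1)) (hp2 : p2 = B (Sum.inl 2))
    (hq1 : q1 = B (Sum.inl 3)) (hq2 : q2 = B (Sum.inl 4))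
    (hX : ∀ a, X a = B (Sum.inr (a, 0))) (hY : ∀ a, Y a = B (Sum.inr (a, 1))) (v : L) :
    ∃ δ ζ : ℝ, ∃ m ∈ span ℝ ({A, p1, p2} ∪ range X ∪ range Y), v = δ • q1 + ζ • q2 + m := by
  have hv : v ∈ span ℝ {q1, q2} ⊔ span ℝ ({A, p1, p2} ∪ range X ∪ range Y) := by
    refine (span_le.2 ?_ : span ℝ (range B) ≤ _) (B.span_eq ▸ mem_top)
    rintro _ ⟨i | ⟨a, k⟩, rfl⟩
    · fin_cases i
      · exact mem_sup_right (subset_span (by simp [hA]))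
      · exact mem_sup_right (subset_span (by simp [hp1]))
      · exact mem_sup_right (subset_span (by simp [hp2]))
      · exact mem_sup_left (subset_span (by simp [hq1]))
      · exact mem_sup_left (subset_span (by simp [hq2]))
    · fin_cases k
      · exact mem_sup_right (subset_span (by simp [← hX]))
      · exact mem_sup_right (subset_span (by simp [← hY]))
  obtain ⟨u, hu, m, hm, rfl⟩ := mem_sup.1 hv
  obtain ⟨δ, ζ, rfl⟩ := mem_span_pair.1 hu
  exact ⟨δ, ζ, m, hm, rfl⟩

theorem eq_zero_of_isNilpotent_ad_smul_q1_add_smul_q2_add (hε : ε ≠ 0)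
    (h1 : ⁅A, q1⁆ = (2 : ℝ) • p2) (h2 : ⁅A, q2⁆ = (2 * ε) • p1) (h4 : ⁅p1, q2⁆ = p2 + A)
    (h5 : ⁅p2, q1⁆ = -((3 : ℝ) • p2) - A) (h6 : ⁅p2, q2⁆ = -(ε • p1))
    (he : (2 : ℝ) • p2 + A ≠ 0) (hf : p2 + A ≠ 0) {δ ζ : ℝ} {m : L}
    (hm : ∀ z ∈ span ℝ {A, p1, p2}, ⁅m, z⁆ = 0)
    (hnil : IsNilpotent (ad ℝ L (δ • q1 + ζ • q2 + m))) : δ = 0 ∧ ζ = 0 := by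
  set v := δ • q1 + ζ • q2 + m
  have hv : ∀ z ∈ span ℝ {A, p1, p2}, ⁅v, z⁆ = δ • ⁅q1, z⁆ + ζ • ⁅q2, z⁆ := fun z hz => by
    simp only [v, add_lie, smul_lie, hm z hz, add_zero]
  have hAZ : A ∈ span ℝ {A, p1, p2} := subset_span (by simp)
  have hp1Z : p1 ∈ span ℝ {A, p1, p2} := subset_span (by simp)
  have hp2Z : p2 ∈ span ℝ {A, p1, p2} := subset_span (by simp)
  have k1 : ⁅q1, A⁆ = -((2 : ℝ) • p2) := by rw [← lie_skew, h1]
  have k2 : ⁅q2, A⁆ = -((2 * ε) • p1) := by rw [← lie_skew, h2]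
  have k4 : ⁅q2, p1⁆ = -(p2 + A) := by rw [← lie_skew, h4]
  have k5 : ⁅q1, p2⁆ = -(-((3 : ℝ) • p2) - A) := by rw [← lie_skew, h5]
  have k6 : ⁅q2, p2⁆ = ε • p1 := by rw [← lie_skew, h6, neg_neg]
  obtain rfl : δ = 0 := by
    have hve : ad ℝ L v ((2 : ℝ) • p2 + A) = (2 * δ) • ((2 : ℝ) • p2 + A) := by
      rw [ad_apply, hv _ (add_mem (smul_mem _ _ hp2Z) hAZ), lie_add, lie_smul, lie_add, lie_smul,
        k1, k2, k5, k6]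
      module
    simpa using Module.End.eq_zero_of_isNilpotent_of_apply_eq_smul hnil he hve
  have hvf : ⁅v, p2 + A⁆ = (-(ε * ζ)) • p1 := by
    rw [hv _ (add_mem hp2Z hAZ), lie_add, lie_add, k2, k6]
    module
  have hvp1 : ⁅v, p1⁆ = (-ζ) • (p2 + A) := by
    rw [hv _ hp1Z, k4]
    module
  have hvvf : (ad ℝ L v ^ 2) (p2 + A) = (ε * ζ ^ 2) • (p2 + A) := by
    rw [sq, Module.End.mul_apply, ad_apply, ad_apply, hvf, lie_smul, hvp1, smul_smul]
    congr 1
    ring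
  have := Module.End.eq_zero_of_isNilpotent_of_apply_eq_smul (hnil.pow_of_pos two_ne_zero) hf hvvf
  exact ⟨rfl, by simpa [hε] using this⟩

end

theorem stmt12_general (n : ℕ) (ε b R₀ : ℝ) (hε : ε = 1 ∨ ε = -1)
    (L : Type*) [LieRing L] [LieAlgebra ℝ L]
    (B : Module.Basis (Fin 5 ⊕ Fin n × Fin 2) ℝ L)
    (A p1 p2 q1 q2 : L) (X Y : Fin n → L)
    (hA : A = B (Sum.inl 0)) (hp1 : p1 = B (Sum.inl 1)) (hp2 : p2 = B (Sum.inl 2))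
    (hq1 : q1 = B (Sum.inl 3)) (hq2 : q2 = B (Sum.inl 4))
    (hX : ∀ a, X a = B (Sum.inr (a, 0))) (hY : ∀ a, Y a = B (Sum.inr (a, 1)))
    (h1 : ⁅A, q1⁆ = (2 : ℝ) • p2)
    (h2 : ⁅A, q2⁆ = (2 * ε) • p1)
    (h3 : ⁅p1, q1⁆ = -p1)
    (h4 : ⁅p1, q2⁆ = p2 + A)
    (h5 : ⁅p2, q1⁆ = -((3 : ℝ) • p2) - A)
    (h6 : ⁅p2, q2⁆ = -(ε • p1))
    (h7 : ⁅q1, q2⁆ = (2 * b) • p2 - ((R₀ - 2 * b) / 2) • A)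
    (h8 : ∀ a, ⁅q1, X a⁆ = X a)
    (h9 : ∀ a, ⁅q1, Y a⁆ = Y a)
    (h10 : ∀ a, ⁅q2, X a⁆ = Y a)
    (h11 : ∀ a, ⁅q2, Y a⁆ = ε • X a)
    (hz1 : ⁅A, p1⁆ = 0) (hz2 : ⁅A, p2⁆ = 0)
    (hz3 : ∀ a, ⁅A, X a⁆ = 0) (hz4 : ∀ a, ⁅A, Y a⁆ = 0)
    (hz5 : ⁅p1, p2⁆ = 0)
    (hz6 : ∀ a, ⁅p1, X a⁆ = 0) (hz7 : ∀ a, ⁅p1, Y a⁆ = 0)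
    (hz8 : ∀ a, ⁅p2, X a⁆ = 0) (hz9 : ∀ a, ⁅p2, Y a⁆ = 0)
    (hz10 : ∀ a c, ⁅X a, X c⁆ = 0)
    (hz11 : ∀ a c, ⁅Y a, Y c⁆ = 0)
    (N : Submodule ℝ L)
    (hN : N = Submodule.span ℝ ({A, p1, p2} ∪ Set.range X ∪ Set.range Y)) :
    (∀ x : L, ∀ y ∈ N, ⁅x, y⁆ ∈ N) ∧
    (∀ x ∈ N, ∀ y ∈ N, ∀ z ∈ N, ⁅x, ⁅y, z⁆⁆ = 0) ∧
    (∀ I : LieIdeal ℝ L, LieRing.IsNilpotent I → ∀ v : L, v ∈ I → v ∈ N) := by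
  subst hN
  have hZ : ∀ z ∈ span ℝ {A, p1, p2}, ∀ y ∈ span ℝ ({A, p1, p2} ∪ range X ∪ range Y),
      ⁅z, y⁆ = 0 := fun z hz y hy =>
    lie_eq_zero_of_mem_span_center hz1 hz2 hz3 hz4 hz5 hz6 hz7 hz8 hz9 hz hy
  have hNN : ∀ x ∈ span ℝ ({A, p1, p2} ∪ range X ∪ range Y),
      ∀ y ∈ span ℝ ({A, p1, p2} ∪ range X ∪ range Y), ⁅x, y⁆ ∈ span ℝ {A, p1, p2} :=
    fun x hx y hy => lie_mem_span_center_of_mem hZ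
      (lie_X_Y_mem_span_center B hA hp1 hp2 hq1 hq2 hX hY h1 h3 h5 h7 h8 h9) hz10 hz11 hx hy
  have hZN : span ℝ {A, p1, p2} ≤ span ℝ ({A, p1, p2} ∪ range X ∪ range Y) :=
    span_mono (by simp [union_assoc])
  refine ⟨fun x y hy => ?_, fun x hx y hy z hz => ?_, fun I _ v hv => ?_⟩
  · obtain ⟨δ, ζ, m, hm, rfl⟩ := exists_eq_smul_q1_add_smul_q2_add B hA hp1 hp2 hq1 hq2 hX hY x
    rw [add_lie, add_lie, smul_lie, smul_lie]
    exact add_mem (add_mem (smul_mem _ _ (lie_q1_mem_span h1 h3 h5 h8 h9 hy))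
      (smul_mem _ _ (lie_q2_mem_span h2 h4 h6 h10 h11 hy))) (hZN (hNN m hm y hy))
  · rw [← lie_skew, hZ _ (hNN y hy z hz) x hx, neg_zero]
  · obtain ⟨δ, ζ, m, hm, rfl⟩ := exists_eq_smul_q1_add_smul_q2_add B hA hp1 hp2 hq1 hq2 hX hY v
    have he : (2 : ℝ) • p2 + A ≠ 0 := by
      rw [hp2, hA]
      exact B.smul_add_ne_zero (by simp) 2
    have hf : p2 + A ≠ 0 := by
      rw [hp2, hA, ← one_smul ℝ (B _)]
      exact B.smul_add_ne_zero (by simp) 1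
    obtain ⟨rfl, rfl⟩ := eq_zero_of_isNilpotent_ad_smul_q1_add_smul_q2_add
      (by rcases hε with rfl | rfl <;> norm_num) h1 h2 h4 h5 h6 he hf
      (fun z hz => lie_eq_zero_comm.1 (hZ z hz m hm)) (I.isNilpotent_ad_of_mem hv)
    simpa using hm

/-- The Lie algebra `𝔤` of STATEMENT 11 has nilradical
`𝔫 = span{p₁, p₂, Xₐ, JXₐ, A}`: the span `N` is an ideal, `[𝔫,[𝔫,𝔫]] = 0`
(2-step nilpotent), and every nilpotent ideal of `𝔤` is contained in `N`.
Here `A = B (inl 0)`, `p₁ = B (inl 1)`, `p₂ = B (inl 2)`, `q₁ = B (inl 3)`,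
`q₂ = B (inl 4)`, `Xₐ = B (inr (a,0))`, `JXₐ = B (inr (a,1))`. -/
theorem stmt12 (n : ℕ) (ε b R₀ : ℝ) (hε : ε = 1 ∨ ε = -1)
    (L : Type*) [LieRing L] [LieAlgebra ℝ L]
    (B : Module.Basis (Fin 5 ⊕ Fin n × Fin 2) ℝ L)
    (A p1 p2 q1 q2 : L) (X Y : Fin n → L)
    (hA : A = B (Sum.inl 0)) (hp1 : p1 = B (Sum.inl 1)) (hp2 : p2 = B (Sum.inl 2))
    (hq1 : q1 = B (Sum.inl 3)) (hq2 : q2 = B (Sum.inl 4))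
    (hX : ∀ a, X a = B (Sum.inr (a, 0))) (hY : ∀ a, Y a = B (Sum.inr (a, 1)))
    (h1 : ⁅A, q1⁆ = (2 : ℝ) • p2)
    (h2 : ⁅A, q2⁆ = (2 * ε) • p1)
    (h3 : ⁅p1, q1⁆ = -p1)
    (h4 : ⁅p1, q2⁆ = p2 + A)
    (h5 : ⁅p2, q1⁆ = -((3 : ℝ) • p2) - A)
    (h6 : ⁅p2, q2⁆ = -(ε • p1))
    (h7 : ⁅q1, q2⁆ = (2 * b) • p2 - ((R₀ - 2 * b) / 2) • A)
    (h8 : ∀ a, ⁅q1, X a⁆ = X a)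
    (h9 : ∀ a, ⁅q1, Y a⁆ = Y a)
    (h10 : ∀ a, ⁅q2, X a⁆ = Y a)
    (h11 : ∀ a, ⁅q2, Y a⁆ = ε • X a)
    (h12 : ∀ a, ⁅X a, Y a⁆ = (2 : ℝ) • p2 + A)
    (hz1 : ⁅A, p1⁆ = 0) (hz2 : ⁅A, p2⁆ = 0)
    (hz3 : ∀ a, ⁅A, X a⁆ = 0) (hz4 : ∀ a, ⁅A, Y a⁆ = 0)
    (hz5 : ⁅p1, p2⁆ = 0)
    (hz6 : ∀ a, ⁅p1, X a⁆ = 0) (hz7 : ∀ a, ⁅p1, Y a⁆ = 0)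
    (hz8 : ∀ a, ⁅p2, X a⁆ = 0) (hz9 : ∀ a, ⁅p2, Y a⁆ = 0)
    (hz10 : ∀ a c, ⁅X a, X c⁆ = 0)
    (hz11 : ∀ a c, ⁅Y a, Y c⁆ = 0)
    (N : Submodule ℝ L)
    (hN : N = Submodule.span ℝ ({A, p1, p2} ∪ Set.range X ∪ Set.range Y)) :
    (∀ x : L, ∀ y ∈ N, ⁅x, y⁆ ∈ N) ∧
    (∀ x ∈ N, ∀ y ∈ N, ∀ z ∈ N, ⁅x, ⁅y, z⁆⁆ = 0) ∧
    (∀ I : LieIdeal ℝ L, LieRing.IsNilpotent I → ∀ v : L, v ∈ I → v ∈ N) :=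
  stmt12_general n ε b R₀ hε L B A p1 p2 q1 q2 X Y hA hp1 hp2 hq1 hq2 hX hY h1 h2 h3 h4 h5 h6 h7 h8
    h9 h10 h11 hz1 hz2 hz3 hz4 hz5 hz6 hz7 hz8 hz9 hz10 hz11 N hN
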